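/- Let z₀ ∈ ℂ∖Λ be fixed and H(x₁,x₂,f₁,f₂) = f₁ + f₂. At every p = (x₁,x₂,f₁,f₂) ∈ U, the vector X(p) = (f₁, f₂, −f₁ f₂ W(x₁−x₂), f₁ f₂ W(x₁−x₂)) satisfies Σ_{k=1}^4 X_k(p) Ω_{kj}(p) = ∂_j H(p) for j = 1,2,3,4; that is, the Hamiltonian vector field of H = f₁ + f₂ with respect to ω equals the flow ẋ₁ = f₁, ẋ₂ = f₂, ḟ₁ = −f₁ f₂ (ζ(z₀+x₁−x₂) − ζ(z₀−x₁+x₂) − 2ζ(x₁−x₂)), ḟ₂ = f₁ f₂ (ζ(z₀+x₁−x₂) − ζ(z₀−x₁+x₂) − 2ζ(x₁−x₂)). -/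

import Mathlib

noncomputable section
open Complex

/-- The lattice Λ = ℤω₁ + ℤω₂. -/
def lattice (ω₁ ω₂ : ℂ) : Set ℂ := {z | ∃ m n : ℤ, z = m * ω₁ + n * ω₂}

/-- The Weierstrass zeta function ζ(z) = 1/z + Σ_{ω ∈ Λ∖{0}} (1/(z−ω) + 1/ω + z/ω²). -/
def wzeta (ω₁ ω₂ : ℂ) (z : ℂ) : ℂ :=
  1 / z + ∑' w : {w : ℂ // w ∈ lattice ω₁ ω₂ ∧ w ≠ 0},
    (1 / (z - (w : ℂ)) + 1 / (w : ℂ) + z / (w : ℂ) ^ 2)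

/-- W(u) = ζ(u+z₀) + ζ(u−z₀) − 2ζ(u). -/
def Wfun (ω₁ ω₂ z₀ u : ℂ) : ℂ :=
  wzeta ω₁ ω₂ (u + z₀) + wzeta ω₁ ω₂ (u - z₀) - 2 * wzeta ω₁ ω₂ u

/-- The antisymmetric matrix field Ω encoding the 2-form
ω = −δln f₁ ∧ δx₁ − δln f₂ ∧ δx₂ + W(x₁−x₂) δx₁ ∧ δx₂,
in the coordinate order (x₁,x₂,f₁,f₂) = (p 0, p 1, p 2, p 3):
Ω₁₂ = W(x₁−x₂), Ω₁₃ = 1/f₁, Ω₂₄ = 1/f₂, Ω₁₄ = Ω₂₃ = Ω₃₄ = 0, Ω_{ji} = −Ω_{ij}. -/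
def OmegaM (ω₁ ω₂ z₀ : ℂ) (p : Fin 4 → ℂ) : Matrix (Fin 4) (Fin 4) ℂ :=
  !![0, Wfun ω₁ ω₂ z₀ (p 0 - p 1), 1 / p 2, 0;
     -Wfun ω₁ ω₂ z₀ (p 0 - p 1), 0, 0, 1 / p 3;
     -(1 / p 2), 0, 0, 0;
     0, -(1 / p 3), 0, 0]

/-- The open set U = {(x₁,x₂,f₁,f₂) : f₁ ≠ 0, f₂ ≠ 0, x₁−x₂ ∉ Λ, x₁−x₂±z₀ ∉ Λ}. -/
def Uset (ω₁ ω₂ z₀ : ℂ) : Set (Fin 4 → ℂ) :=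
  {p | p 2 ≠ 0 ∧ p 3 ≠ 0 ∧ p 0 - p 1 ∉ lattice ω₁ ω₂ ∧
    p 0 - p 1 + z₀ ∉ lattice ω₁ ω₂ ∧ p 0 - p 1 - z₀ ∉ lattice ω₁ ω₂}

/-- Complex partial derivative ∂_i F(p) in the i-th coordinate. -/
def pderiv (i : Fin 4) (F : (Fin 4 → ℂ) → ℂ) (p : Fin 4 → ℂ) : ℂ :=
  deriv (fun t => F (Function.update p i t)) (p i)

/-- The vector field X(p) = (f₁, f₂, −f₁ f₂ W(x₁−x₂), f₁ f₂ W(x₁−x₂)). -/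
def Xvec (ω₁ ω₂ z₀ : ℂ) (p : Fin 4 → ℂ) : Fin 4 → ℂ :=
  ![p 2, p 3, -(p 2 * p 3 * Wfun ω₁ ω₂ z₀ (p 0 - p 1)),
    p 2 * p 3 * Wfun ω₁ ω₂ z₀ (p 0 - p 1)]

theorem neg_mem_lattice {ω₁ ω₂ w : ℂ} (hw : w ∈ lattice ω₁ ω₂) : -w ∈ lattice ω₁ ω₂ := by
  obtain ⟨m, n, rfl⟩ := hw
  exact ⟨-m, -n, by push_cast; ring⟩

def latticeNegEquiv (ω₁ ω₂ : ℂ) :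
    {w : ℂ // w ∈ lattice ω₁ ω₂ ∧ w ≠ 0} ≃ {w : ℂ // w ∈ lattice ω₁ ω₂ ∧ w ≠ 0} :=
  (Equiv.neg ℂ).subtypeEquiv fun w =>
    ⟨fun hw => ⟨neg_mem_lattice hw.1, neg_ne_zero.2 hw.2⟩,
     fun hw => ⟨neg_neg w ▸ neg_mem_lattice hw.1, neg_ne_zero.1 hw.2⟩⟩

theorem wzeta_neg (ω₁ ω₂ z : ℂ) : wzeta ω₁ ω₂ (-z) = -wzeta ω₁ ω₂ z := by
  have term_neg (w : ℂ) :
      1 / (-z - -w) + 1 / -w + -z / (-w) ^ 2 = -(1 / (z - w) + 1 / w + z / w ^ 2) := by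
    rw [sub_neg_eq_add, neg_add_eq_sub, ← neg_sub, div_neg, div_neg, neg_sq]
    ring
  unfold wzeta
  rw [← (latticeNegEquiv ω₁ ω₂).tsum_eq]
  simp only [latticeNegEquiv, Equiv.subtypeEquiv_apply, Equiv.neg_apply, term_neg, tsum_neg]
  ring

theorem Wfun_eq (ω₁ ω₂ z₀ u : ℂ) :
    Wfun ω₁ ω₂ z₀ u = wzeta ω₁ ω₂ (z₀ + u) - wzeta ω₁ ω₂ (z₀ - u) - 2 * wzeta ω₁ ω₂ u := by
  rw [Wfun, add_comm u, ← neg_sub z₀ u, wzeta_neg]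
  ring

theorem pderiv_continuousLinearMap (L : (Fin 4 → ℂ) →L[ℂ] ℂ) (i : Fin 4) (p : Fin 4 → ℂ) :
    pderiv i L p = L (Pi.single i 1) :=
  (L.hasFDerivAt.comp_hasDerivAt (p i) (hasDerivAt_update p i (p i))).deriv

theorem pderiv_coord_two_add_coord_three (p : Fin 4 → ℂ) (j : Fin 4) :
    pderiv j (fun q => q 2 + q 3) p = ![0, 0, 1, 1] j := by
  have hL : (fun q : Fin 4 → ℂ => q 2 + q 3) =
      ⇑(ContinuousLinearMap.proj (R := ℂ) (φ := fun _ : Fin 4 => ℂ) 2 +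
        ContinuousLinearMap.proj (R := ℂ) (φ := fun _ : Fin 4 => ℂ) 3) := rfl
  rw [hL, pderiv_continuousLinearMap]
  fin_cases j <;> simp

theorem Xvec_vecMul_OmegaM (ω₁ ω₂ z₀ : ℂ) {p : Fin 4 → ℂ} (h2 : p 2 ≠ 0) (h3 : p 3 ≠ 0) :
    Matrix.vecMul (Xvec ω₁ ω₂ z₀ p) (OmegaM ω₁ ω₂ z₀ p) = ![0, 0, 1, 1] := by
  ext j
  fin_cases j <;> simp [Xvec, OmegaM, Matrix.vecMul, dotProduct, Fin.sum_univ_four] <;>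
    field_simp <;> ring

theorem spin_RS_N2_hamiltonian_vector_field_general (ω₁ ω₂ : ℂ)
    (z₀ : ℂ) :
    ∀ p ∈ Uset ω₁ ω₂ z₀,
      (∀ j : Fin 4, ∑ k : Fin 4, Xvec ω₁ ω₂ z₀ p k * OmegaM ω₁ ω₂ z₀ p k j
          = pderiv j (fun q => q 2 + q 3) p) ∧
      Xvec ω₁ ω₂ z₀ p = ![p 2, p 3,
        -(p 2 * p 3 * (wzeta ω₁ ω₂ (z₀ + (p 0 - p 1)) - wzeta ω₁ ω₂ (z₀ - (p 0 - p 1))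
          - 2 * wzeta ω₁ ω₂ (p 0 - p 1))),
        p 2 * p 3 * (wzeta ω₁ ω₂ (z₀ + (p 0 - p 1)) - wzeta ω₁ ω₂ (z₀ - (p 0 - p 1))
          - 2 * wzeta ω₁ ω₂ (p 0 - p 1))] := by
  rintro p ⟨h2, h3, -⟩
  refine ⟨fun j => ?_, by simp only [Xvec, Wfun_eq]⟩
  rw [pderiv_coord_two_add_coord_three]
  exact congrFun (Xvec_vecMul_OmegaM ω₁ ω₂ z₀ h2 h3) j

/-- The vector field X(p) = (f₁, f₂, −f₁f₂W(x₁−x₂), f₁f₂W(x₁−x₂)) satisfies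
Σ_k X_k Ω_{kj} = ∂_j H with H = f₁ + f₂; that is, the Hamiltonian vector field of H
with respect to ω is the flow ẋ₁ = f₁, ẋ₂ = f₂,
ḟ₁ = −f₁f₂(ζ(z₀+x₁−x₂) − ζ(z₀−x₁+x₂) − 2ζ(x₁−x₂)), ḟ₂ = −ḟ₁. -/
theorem spin_RS_N2_hamiltonian_vector_field (ω₁ ω₂ : ℂ) (hω : (ω₂ / ω₁).im ≠ 0)
    (z₀ : ℂ) (hz₀ : z₀ ∉ lattice ω₁ ω₂) :
    ∀ p ∈ Uset ω₁ ω₂ z₀,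
      (∀ j : Fin 4, ∑ k : Fin 4, Xvec ω₁ ω₂ z₀ p k * OmegaM ω₁ ω₂ z₀ p k j
          = pderiv j (fun q => q 2 + q 3) p) ∧
      Xvec ω₁ ω₂ z₀ p = ![p 2, p 3,
        -(p 2 * p 3 * (wzeta ω₁ ω₂ (z₀ + (p 0 - p 1)) - wzeta ω₁ ω₂ (z₀ - (p 0 - p 1))
          - 2 * wzeta ω₁ ω₂ (p 0 - p 1))),
        p 2 * p 3 * (wzeta ω₁ ω₂ (z₀ + (p 0 - p 1)) - wzeta ω₁ ω₂ (z₀ - (p 0 - p 1))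
          - 2 * wzeta ω₁ ω₂ (p 0 - p 1))] :=
  spin_RS_N2_hamiltonian_vector_field_general ω₁ ω₂ z₀
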